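/- arXiv:2005.10101 — 6 statements merged into one kernel-verified Lean document; each statement's English description precedes it below -/
import Mathlib

section
/- For any integer d ≥ 1 and reals w > 0, x ≥ 0, and any ξ ∈ [0, 1/(d(d+1))], we have (ξ + 1/(d+1)) * (x+w)^d ≤ (1/w) ∫_x^{x+w} t^d dt + ξ w^d ≤ (x+w)^d. -/
theorem monomial_good_alpha (d : ℕ) (hd : 1 ≤ d) (w x ξ : ℝ)
    (hw : 0 < w) (hx : 0 ≤ x)
    (hξ0 : 0 ≤ ξ) (hξ1 : ξ ≤ 1 / (d * (d + 1))) :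
    (ξ + 1 / (d + 1)) * (x + w) ^ d ≤ (1 / w) * (∫ t in x..(x + w), t ^ d) + ξ * w ^ d ∧
      (1 / w) * (∫ t in x..(x + w), t ^ d) + ξ * w ^ d ≤ (x + w) ^ d := by
  obtain ⟨e, rfl⟩ : ∃ e, d = e + 1 := ⟨d - 1, (Nat.succ_pred_eq_of_pos hd).symm⟩
  set b := x + w with hb
  have hbpos : 0 < b := by positivity
  have hxb : x ≤ b := by linarith
  have hwb : w ≤ b := by linarith
  have hE : (0 : ℝ) < (e : ℝ) + 1 + 1 := by positivity
  push_cast at hξ1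
  have hξ' : ξ * (((e : ℝ) + 1) * ((e : ℝ) + 1 + 1)) ≤ 1 := by
    have hpos : (0 : ℝ) < ((e : ℝ) + 1) * ((e : ℝ) + 1 + 1) := by positivity
    exact (le_div_iff₀ hpos).mp hξ1
  have hξE : ξ * ((e : ℝ) + 1 + 1) ≤ 1 := by
    nlinarith [mul_nonneg (mul_nonneg hξ0 hE.le) (Nat.cast_nonneg (α := ℝ) e)]
  set S := ∑ i ∈ Finset.range (e + 2), b ^ i * x ^ (e + 1 - i) with hS
  have hgeom : b ^ (e + 1 + 1) - x ^ (e + 1 + 1) = S * w := by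
    have hg := geom_sum₂_mul b x (e + 2)
    have hbw : b - x = w := by rw [hb]; ring
    rw [hbw] at hg
    rw [← hg, hS]
    norm_num
  -- term bound for S
  have hterm : ∀ i, i ≤ e + 1 → b ^ i * x ^ (e + 1 - i) ≤ b ^ (e + 1) := by
    intro i hi
    calc b ^ i * x ^ (e + 1 - i) ≤ b ^ i * b ^ (e + 1 - i) := by
          exact mul_le_mul_of_nonneg_left (pow_le_pow_left₀ hx hxb _) (pow_nonneg hbpos.le i)
      _ = b ^ (e + 1) := by rw [← pow_add, Nat.add_sub_cancel' hi]
  have hSup : S ≤ x ^ (e + 1) + ((e : ℝ) + 1) * b ^ (e + 1) := by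
    rw [hS, Finset.sum_range_succ']
    have h1 : ∑ i ∈ Finset.range (e + 1), b ^ (i + 1) * x ^ (e + 1 - (i + 1)) ≤
        ∑ _i ∈ Finset.range (e + 1), b ^ (e + 1) :=
      Finset.sum_le_sum fun i hi => hterm (i + 1) (by
        have := Finset.mem_range.mp hi; omega)
    have h2 : ∑ _i ∈ Finset.range (e + 1), b ^ (e + 1) = ((e : ℝ) + 1) * b ^ (e + 1) := by
      rw [Finset.sum_const, Finset.card_range, nsmul_eq_mul]; push_cast; ring
    have h3 : b ^ 0 * x ^ (e + 1 - 0) = x ^ (e + 1) := by simp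
    rw [h3]
    linarith [h1, h2.le, h2.ge]
  have hSlow : b ^ (e + 1) + b ^ e * x ≤ S := by
    rw [hS, Finset.sum_range_succ, Finset.sum_range_succ]
    have h0 : 0 ≤ ∑ i ∈ Finset.range e, b ^ i * x ^ (e + 1 - i) :=
      Finset.sum_nonneg fun i _ => by positivity
    have he1 : e + 1 - e = 1 := by omega
    have he2 : e + 1 - (e + 1) = 0 := by omega
    rw [he1, he2]
    simp only [pow_one, pow_zero, mul_one]
    linarith
  have hB : x ^ (e + 1) + w ^ (e + 1) ≤ b ^ (e + 1) :=
    pow_add_pow_le hx hw.le (Nat.succ_ne_zero e)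
  have hA : b ^ (e + 1) - w ^ (e + 1) ≤ ((e : ℝ) + 1) * x * b ^ e := by
    have hg := geom_sum₂_mul b w (e + 1)
    have hbw : b - w = x := by rw [hb]; ring
    rw [hbw] at hg
    have hT : ∑ i ∈ Finset.range (e + 1), b ^ i * w ^ (e + 1 - 1 - i) ≤ ((e : ℝ) + 1) * b ^ e := by
      have h1 : ∑ i ∈ Finset.range (e + 1), b ^ i * w ^ (e + 1 - 1 - i) ≤
          ∑ _i ∈ Finset.range (e + 1), b ^ e :=
        Finset.sum_le_sum fun i hi => by
          have hi' : i ≤ e := by have := Finset.mem_range.mp hi; omega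
          have hsub : e + 1 - 1 - i = e - i := by omega
          rw [hsub]
          calc b ^ i * w ^ (e - i) ≤ b ^ i * b ^ (e - i) :=
                mul_le_mul_of_nonneg_left (pow_le_pow_left₀ hw.le hwb _) (pow_nonneg hbpos.le i)
            _ = b ^ e := by rw [← pow_add, Nat.add_sub_cancel' hi']
      have h2 : ∑ _i ∈ Finset.range (e + 1), b ^ e = ((e : ℝ) + 1) * b ^ e := by
        rw [Finset.sum_const, Finset.card_range, nsmul_eq_mul]; push_cast; ring
      linarith
    calc b ^ (e + 1) - w ^ (e + 1) = (∑ i ∈ Finset.range (e + 1), b ^ i * w ^ (e + 1 - 1 - i)) * x := hg.symm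
      _ ≤ ((e : ℝ) + 1) * b ^ e * x := mul_le_mul_of_nonneg_right hT hx
      _ = ((e : ℝ) + 1) * x * b ^ e := by ring
  -- combined bounds
  have hcomb : ξ * ((e : ℝ) + 1 + 1) * (b ^ (e + 1) - w ^ (e + 1)) ≤ x * b ^ e := by
    have hs1 : ξ * ((e : ℝ) + 1 + 1) * (b ^ (e + 1) - w ^ (e + 1)) ≤
        ξ * ((e : ℝ) + 1 + 1) * (((e : ℝ) + 1) * x * b ^ e) :=
      mul_le_mul_of_nonneg_left hA (by positivity)
    have hxbe : 0 ≤ x * b ^ e := by positivity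
    nlinarith [hξ', hxbe]
  have hξw : ξ * w ^ (e + 1) * ((e : ℝ) + 1 + 1) ≤ w ^ (e + 1) := by
    nlinarith [pow_pos hw (e + 1), hξE]
  have main_low : (ξ * ((e : ℝ) + 1 + 1) + 1) * b ^ (e + 1) ≤
      S + ξ * w ^ (e + 1) * ((e : ℝ) + 1 + 1) := by nlinarith [hcomb, hSlow]
  have main_up : S + ξ * w ^ (e + 1) * ((e : ℝ) + 1 + 1) ≤ b ^ (e + 1) * ((e : ℝ) + 1 + 1) := by
    nlinarith [hSup, hB, hξw]
  rw [integral_pow, hgeom]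
  push_cast
  have hred : 1 / w * (S * w / ((e : ℝ) + 1 + 1)) = S / ((e : ℝ) + 1 + 1) := by
    field_simp
  rw [hred]
  have rhs_eq : S / ((e : ℝ) + 1 + 1) + ξ * w ^ (e + 1) =
      (S + ξ * w ^ (e + 1) * ((e : ℝ) + 1 + 1)) / ((e : ℝ) + 1 + 1) := by
    field_simp
  constructor
  · have lhs_eq : (ξ + 1 / ((e : ℝ) + 1 + 1)) * b ^ (e + 1) =
        ((ξ * ((e : ℝ) + 1 + 1) + 1) * b ^ (e + 1)) / ((e : ℝ) + 1 + 1) := by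
      field_simp
    rw [lhs_eq, rhs_eq]
    gcongr
  · have rhs_eq2 : b ^ (e + 1) = (b ^ (e + 1) * ((e : ℝ) + 1 + 1)) / ((e : ℝ) + 1 + 1) := by
      field_simp
    rw [rhs_eq, rhs_eq2]
    gcongr
end

section
/- Let c : ℝ → ℝ be nonnegative, nondecreasing, and concave on [0,∞), and let ξ ∈ [0, 1/2]. Then for all x ≥ 0 and w > 0: (1/2 + ξ) c(x+w) ≤ (1/w) ∫_x^{x+w} c(t) dt + ξ c(w) ≤ (1 + ξ) c(x+w). -/
/-!
Concavity gives `f x + f y ≤ f z + f (x + y - z)` for `z` between `x` and `y`. Integrated over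
`[x, x + w]` this is the trapezoid bound `(c x + c (x + w)) / 2 ≤ (1 / w) ∫ c`; at `0 ≤ x ≤ x + w`
it is `c (x + w) - c w ≤ c x - c 0 ≤ c x`. With `ξ ≤ 1 / 2` these two give the lower bound; the
upper bound only needs `c ≤ c (x + w)` on `[0, x + w]`.
-/

open Set MeasureTheory

theorem ConcaveOn.add_le_add_of_mem_segment {𝕜 E β : Type*} [Field 𝕜] [LinearOrder 𝕜]
    [IsStrictOrderedRing 𝕜] [AddCommGroup E] [Module 𝕜 E] [AddCommGroup β] [PartialOrder β]
    [IsOrderedAddMonoid β] [Module 𝕜 β] {s : Set E} {f : E → β} (hf : ConcaveOn 𝕜 s f)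
    {x y z : E} (hx : x ∈ s) (hy : y ∈ s) (hz : z ∈ segment 𝕜 x y) :
    f x + f y ≤ f z + f (x + y - z) := by
  obtain ⟨a, b, ha, hb, hab, rfl⟩ := hz
  obtain rfl : b = 1 - a := eq_sub_of_add_eq' hab
  have hreflect : x + y - (a • x + (1 - a) • y) = (1 - a) • x + a • y := by
    simp only [sub_smul, one_smul]; abel
  rw [hreflect]
  calc f x + f y = (a • f x + (1 - a) • f y) + ((1 - a) • f x + a • f y) := by
        simp only [sub_smul, one_smul]; abel
    _ ≤ f (a • x + (1 - a) • y) + f ((1 - a) • x + a • y) :=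
        add_le_add (hf.2 hx hy ha hb hab) (hf.2 hx hy hb ha (by rw [add_comm, hab]))

theorem ConcaveOn.map_add_add_map_zero_le {𝕜 β : Type*} [Field 𝕜] [LinearOrder 𝕜]
    [IsStrictOrderedRing 𝕜] [AddCommGroup β] [PartialOrder β]
    [IsOrderedAddMonoid β] [Module 𝕜 β] {f : 𝕜 → β} (hf : ConcaveOn 𝕜 (Ici 0) f)
    {x y : 𝕜} (hx : 0 ≤ x) (hy : 0 ≤ y) :
    f (x + y) + f 0 ≤ f x + f y := by
  have hxy : 0 ≤ x + y := add_nonneg hx hy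
  have hmem : x ∈ segment 𝕜 0 (x + y) := by
    rw [segment_eq_Icc hxy]; exact ⟨hx, le_add_of_nonneg_right hy⟩
  simpa [add_comm] using hf.add_le_add_of_mem_segment self_mem_Ici hxy hmem

theorem ConcaveOn.trapezoid_le_integral {f : ℝ → ℝ} {a b : ℝ} (hf : ConcaveOn ℝ (Icc a b) f)
    (hab : a ≤ b) (hint : IntervalIntegrable f volume a b) :
    (b - a) * (f a + f b) / 2 ≤ ∫ t in a..b, f t := by
  have hreflect : ∫ t in a..b, f (a + b - t) = ∫ t in a..b, f t := by
    simp [intervalIntegral.integral_comp_sub_left]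
  have hpointwise : ∀ t ∈ Icc a b, f a + f b ≤ f t + f (a + b - t) := fun t ht =>
    hf.add_le_add_of_mem_segment (left_mem_Icc.2 hab) (right_mem_Icc.2 hab)
      (by rwa [segment_eq_Icc hab])
  have hint' : IntervalIntegrable (fun t => f (a + b - t)) volume a b := by
    simpa using (hint.comp_sub_left (a + b)).symm
  have hintegrated := intervalIntegral.integral_mono_on hab intervalIntegrable_const
    (hint.add hint') hpointwise
  rw [intervalIntegral.integral_add hint hint', hreflect,
    intervalIntegral.integral_const, smul_eq_mul] at hintegrated
  linarith

theorem concave_good_alpha (c : ℝ → ℝ)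
    (hnonneg : ∀ t ∈ Set.Ici (0:ℝ), 0 ≤ c t)
    (hmono : MonotoneOn c (Set.Ici 0))
    (hconc : ConcaveOn ℝ (Set.Ici 0) c)
    (ξ : ℝ) (hξ0 : 0 ≤ ξ) (hξ1 : ξ ≤ 1 / 2) :
    ∀ x w : ℝ, 0 ≤ x → 0 < w →
      (1 / 2 + ξ) * c (x + w) ≤ (1 / w) * (∫ t in x..(x + w), c t) + ξ * c w ∧
        (1 / w) * (∫ t in x..(x + w), c t) + ξ * c w ≤ (1 + ξ) * c (x + w) := by
  intro x w hx hw
  have hxw : x ≤ x + w := le_add_of_nonneg_right hw.le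
  have hIcc : Icc x (x + w) ⊆ Ici 0 := fun t ht => hx.trans ht.1
  have hint : IntervalIntegrable c volume x (x + w) :=
    (hmono.mono (uIcc_of_le hxw ▸ hIcc)).intervalIntegrable
  have hlower : w * (c x + c (x + w)) / 2 ≤ ∫ t in x..(x + w), c t := by
    simpa using (hconc.subset hIcc (convex_Icc _ _)).trapezoid_le_integral hxw hint
  have hupper : ∫ t in x..(x + w), c t ≤ w * c (x + w) := by
    simpa using intervalIntegral.integral_mono_on hxw hint intervalIntegrable_const
      fun t ht => hmono (hIcc ht) (hIcc (right_mem_Icc.2 hxw)) ht.2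
  have hsubadd := hconc.map_add_add_map_zero_le hx hw.le
  have hcw : c w ≤ c (x + w) := hmono (mem_Ici.2 hw.le) (hIcc (right_mem_Icc.2 hxw))
    (le_add_of_nonneg_left hx)
  have hc0 := hnonneg 0 self_mem_Ici
  have hcx := hnonneg x hx
  have havg_lower : (c x + c (x + w)) / 2 ≤ 1 / w * ∫ t in x..(x + w), c t := by
    rw [one_div_mul_eq_div, le_div_iff₀ hw]; linarith
  have havg_upper : 1 / w * ∫ t in x..(x + w), c t ≤ c (x + w) := by
    rw [one_div_mul_eq_div, div_le_iff₀ hw]; linarith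
  constructor
  · linarith [mul_le_mul_of_nonneg_left hsubadd hξ0, mul_nonneg hξ0 hc0,
      mul_le_mul_of_nonneg_right hξ1 hcx]
  · linarith [mul_le_mul_of_nonneg_left hcw hξ0]
end

section
/- For all w ≥ 1 and x ≥ 1, we have 1 < (1 + x/w) * ln(1 + w/x) ≤ (1 + 1/w) * ln(1 + w). -/
/-!
Put `t = w / x`, so that the quantity is `(1 + t⁻¹) log (1 + t)` with `0 < t ≤ w`. This is the slope
of the secant of the convex function `s ↦ s log s` between `1` and `1 + t`, hence nondecreasing in
`t`; that gives the upper bound (attained at `x = 1`). The lower bound is the strict inequality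
`log (1 + t) > t / (1 + t)`, which follows from `log y < y - 1` at `y = (1 + t)⁻¹`.
-/

open Real

lemma one_add_inv_mul_log_one_add_eq_secant {t : ℝ} (ht : t ≠ 0) :
    (1 + t⁻¹) * log (1 + t) = ((1 + t) * log (1 + t) - 1 * log 1) / (1 + t - 1) := by
  rw [log_one, mul_zero, sub_zero, add_sub_cancel_left]
  field_simp
  ring

lemma one_add_inv_mul_log_one_add_le {s t : ℝ} (hs : -1 ≤ s) (hs0 : s ≠ 0) (ht0 : t ≠ 0)
    (hst : s ≤ t) : (1 + s⁻¹) * log (1 + s) ≤ (1 + t⁻¹) * log (1 + t) := by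
  rw [one_add_inv_mul_log_one_add_eq_secant hs0, one_add_inv_mul_log_one_add_eq_secant ht0]
  exact strictConvexOn_mul_log.convexOn.secant_mono (f := fun y ↦ y * log y)
    (Set.mem_Ici.2 zero_le_one) (Set.mem_Ici.2 (by linarith)) (Set.mem_Ici.2 (by linarith))
    (by simpa using hs0) (by simpa using ht0) (by linarith)

lemma one_lt_one_add_inv_mul_log_one_add {t : ℝ} (ht : 0 < t) : 1 < (1 + t⁻¹) * log (1 + t) := by
  have h1t : 0 < 1 + t := by linarith
  have hlog : t / (1 + t) < log (1 + t) := by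
    have := log_lt_sub_one_of_pos (inv_pos.2 h1t) (inv_ne_one.2 (by linarith))
    rw [log_inv] at this
    have hsub : 1 - (1 + t)⁻¹ = t / (1 + t) := by field_simp; ring
    linarith
  calc 1 = (1 + t⁻¹) * (t / (1 + t)) := by field_simp; ring
    _ < (1 + t⁻¹) * log (1 + t) := by gcongr

theorem R_bounds (w x : ℝ) (hw : 1 ≤ w) (hx : 1 ≤ x) :
    1 < (1 + x / w) * Real.log (1 + w / x) ∧
      (1 + x / w) * Real.log (1 + w / x) ≤ (1 + 1 / w) * Real.log (1 + w) := by
  have hx0 : 0 < x := by linarith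
  have ht : 0 < w / x := div_pos (by linarith) hx0
  rw [← inv_div w x, one_div]
  refine ⟨one_lt_one_add_inv_mul_log_one_add ht,
    one_add_inv_mul_log_one_add_le (by linarith) ht.ne' (by linarith) ?_⟩
  exact div_le_self (by linarith) hx
end

section
/- Let W ≥ 1 and λ ≥ 1, and define c : ℝ≥0 → ℝ by c(x) = λ for 0 ≤ x < 1 and c(x) = 1/x for x ≥ 1. Then for all x ∈ [1, W]: λ · c(x) ≤ (1/x) ∫_0^x c(t) dt ≤ (ln W + λ) · c(x). -/
/-! Since `∫₀ˣ c = λ + log x` and `c x = 1 / x` for `x ≥ 1`, after multiplying by `x` both bounds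
reduce to `0 ≤ log x ≤ log W`. -/

open Set intervalIntegral

theorem integral_zero_eq_const_add_log {c : ℝ → ℝ} {lam x : ℝ}
    (hc₁ : EqOn c (fun _ => lam) (Ioo 0 1)) (hc₂ : EqOn c (fun t => 1 / t) (Ici 1))
    (hx : 1 ≤ x) :
    ∫ t in (0:ℝ)..x, c t = lam + Real.log x := by
  have hc₂' : EqOn c (fun t => 1 / t) (uIcc 1 x) := fun t ht => hc₂ (uIcc_of_le hx ▸ ht).1
  have hzero : (0:ℝ) ∉ uIcc 1 x := fun h => by linarith [(uIcc_of_le hx ▸ h).1]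
  have hint₁ : IntervalIntegrable c MeasureTheory.volume 0 1 :=
    (intervalIntegrable_congr_uIoo (by rwa [uIoo_of_le zero_le_one])).mpr intervalIntegrable_const
  have hint₂ : IntervalIntegrable c MeasureTheory.volume 1 x :=
    (intervalIntegrable_congr (hc₂'.mono uIoc_subset_uIcc)).mpr
      (intervalIntegrable_one_div (fun t ht => ne_of_mem_of_not_mem ht hzero) continuousOn_id)
  calc ∫ t in (0:ℝ)..x, c t = (∫ t in (0:ℝ)..1, c t) + ∫ t in (1:ℝ)..x, c t :=
        (integral_add_adjacent_intervals hint₁ hint₂).symm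
    _ = lam + Real.log x := by
        rw [integral_congr_Ioo_of_le zero_le_one hc₁, integral_congr hc₂', integral_one_div hzero]
        simp

theorem fair_cost_good_beta_general (W lam : ℝ)
    (c : ℝ → ℝ)
    (hc1 : ∀ x : ℝ, 0 ≤ x → x < 1 → c x = lam)
    (hc2 : ∀ x : ℝ, 1 ≤ x → c x = 1 / x) :
    ∀ x : ℝ, 1 ≤ x → x ≤ W →
      lam * c x ≤ (1 / x) * (∫ t in (0:ℝ)..x, c t) ∧
        (1 / x) * (∫ t in (0:ℝ)..x, c t) ≤ (Real.log W + lam) * c x := by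
  intro x hx hxW
  rw [integral_zero_eq_const_add_log (fun t ht => hc1 t ht.1.le ht.2) (fun t ht => hc2 t ht) hx,
    hc2 x hx, mul_one_div, mul_one_div, one_div_mul_eq_div]
  have hlog_nonneg : 0 ≤ Real.log x := Real.log_nonneg hx
  have hlog_le : Real.log x ≤ Real.log W := Real.log_le_log (by linarith) hxW
  constructor <;> gcongr ?_ / x <;> linarith

theorem fair_cost_good_beta (W lam : ℝ) (hW : 1 ≤ W) (hlam : 1 ≤ lam)
    (c : ℝ → ℝ)
    (hc1 : ∀ x : ℝ, 0 ≤ x → x < 1 → c x = lam)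
    (hc2 : ∀ x : ℝ, 1 ≤ x → c x = 1 / x) :
    ∀ x : ℝ, 1 ≤ x → x ≤ W →
      lam * c x ≤ (1 / x) * (∫ t in (0:ℝ)..x, c t) ∧
        (1 / x) * (∫ t in (0:ℝ)..x, c t) ≤ (Real.log W + lam) * c x :=
  fair_cost_good_beta_general W lam c hc1 hc2
end

section
/- Consider a finite weighted congestion game: finite player set N with weights w_i > 0, finite resource set E, strategy sets S_i ⊆ 2^E, cost functions c_e ≥ 0, player cost C_i(s) = Σ_{e ∈ s_i} c_e(x_e(s)), where x_e(s) is the total weight on e. Suppose for each e ∈ E there exist positive reals α₁ₑ, α₂ₑ and a set function φ_e : 2^N → ℝ with φ_e(∅) = 0 such that for all players i and I ⊆ N \ {i}: α₁ₑ · w_i · c_e(w_I + w_i) ≤ φ_e(I ∪ {i}) − φ_e(I) ≤ α₂ₑ · w_i · c_e(w_I + w_i). Then any minimizer s of Φ(s) = Σ_e (1/α₁ₑ) φ_e(N_e(s)) is an α-approximate pure Nash equilibrium with α = max_e α₂ₑ/α₁ₑ; i.e., C_i(s) ≤ α · C_i(s'_i, s_{-i}) for all i and s'_i ∈ S_i.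 -/
open Finset

variable {ι E : Type*}

/-- The set of players using resource `e` under profile `s`. -/
def usersOf [Fintype ι] (s : ι → Finset E) (e : E) [DecidableEq E] : Finset ι :=
  Finset.univ.filter (fun i => e ∈ s i)

/-- The load of resource `e`: total weight of players using it. -/
def load [Fintype ι] [DecidableEq E] (w : ι → ℝ) (s : ι → Finset E) (e : E) : ℝ :=
  ∑ i ∈ usersOf s e, w i

/-- The cost of player `i` under profile `s`. -/
def playerCost [Fintype ι] [DecidableEq E] (w : ι → ℝ) (c : E → ℝ → ℝ)
    (s : ι → Finset E) (i : ι) : ℝ :=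
  ∑ e ∈ s i, c e (load w s e)

theorem potential_method_existence
    [Fintype ι] [DecidableEq ι] [Fintype E] [DecidableEq E] [Nonempty E]
    (w : ι → ℝ) (hw : ∀ i, 0 < w i)
    (c : E → ℝ → ℝ) (hc : ∀ e t, 0 ≤ c e t)
    (S : ι → Set (Finset E))
    (α₁ α₂ : E → ℝ) (hα₁ : ∀ e, 0 < α₁ e) (hα₂ : ∀ e, 0 < α₂ e)
    (φ : E → Finset ι → ℝ) (hφ0 : ∀ e, φ e ∅ = 0)
    (hφ : ∀ e (i : ι) (I : Finset ι), i ∉ I →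
      α₁ e * (w i * c e ((∑ j ∈ I, w j) + w i)) ≤ φ e (insert i I) - φ e I ∧
        φ e (insert i I) - φ e I ≤ α₂ e * (w i * c e ((∑ j ∈ I, w j) + w i)))
    (s : ι → Finset E) (hs : ∀ i, s i ∈ S i)
    (hmin : ∀ s' : ι → Finset E, (∀ i, s' i ∈ S i) →
      (∑ e : E, (1 / α₁ e) * φ e (usersOf s e)) ≤ ∑ e : E, (1 / α₁ e) * φ e (usersOf s' e)) :
    ∀ i : ι, ∀ si' ∈ S i,
      playerCost w c s i ≤
        (Finset.univ.sup' Finset.univ_nonempty (fun e : E => α₂ e / α₁ e)) *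
          playerCost w c (Function.update s i si') i := by

  intro i si' hsi'
  classical
  set s' := Function.update s i si' with hs'def
  have hs'i : s' i = si' := Function.update_self i si' s
  have hs'j : ∀ j, j ≠ i → s' j = s j := fun j hj => Function.update_of_ne hj si' s
  have hs'S : ∀ j, s' j ∈ S j := by
    intro j
    by_cases h : j = i
    · subst h; rw [hs'i]; exact hsi'
    · rw [hs'j j h]; exact hs j
  set α := Finset.univ.sup' Finset.univ_nonempty (fun e : E => α₂ e / α₁ e) with hαdef
  have hαge : ∀ e : E, α₂ e / α₁ e ≤ α := fun e => Finset.le_sup' (fun e : E => α₂ e / α₁ e) (mem_univ e)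
  set I : E → Finset ι := fun e => (usersOf s e).erase i with hIdef
  have hiI : ∀ e, i ∉ I e := fun e => Finset.notMem_erase i _
  have hmemus : ∀ (t : ι → Finset E) e j, j ∈ usersOf t e ↔ e ∈ t j := by
    intro t e j; simp [usersOf]
  have hIs' : ∀ e, (usersOf s' e).erase i = I e := by
    intro e
    ext j
    simp only [hIdef, Finset.mem_erase, hmemus]
    constructor
    · rintro ⟨hj, hj2⟩; exact ⟨hj, by rwa [hs'j j hj] at hj2⟩
    · rintro ⟨hj, hj2⟩; exact ⟨hj, by rwa [hs'j j hj]⟩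
  have husers_s : ∀ e, e ∈ s i → usersOf s e = insert i (I e) := by
    intro e he
    exact (Finset.insert_erase ((hmemus s e i).2 he)).symm
  have husers_s_not : ∀ e, e ∉ s i → usersOf s e = I e := by
    intro e he
    exact (Finset.erase_eq_of_notMem (fun h => he ((hmemus s e i).1 h))).symm
  have husers_s' : ∀ e, e ∈ si' → usersOf s' e = insert i (I e) := by
    intro e he
    rw [← hIs' e]
    exact (Finset.insert_erase ((hmemus s' e i).2 (by rwa [hs'i]))).symm
  have husers_s'_not : ∀ e, e ∉ si' → usersOf s' e = I e := by
    intro e he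
    rw [← hIs' e]
    exact (Finset.erase_eq_of_notMem (fun h => he (by rw [← hs'i]; exact (hmemus s' e i).1 h))).symm
  have hload_s : ∀ e, e ∈ s i → load w s e = (∑ j ∈ I e, w j) + w i := by
    intro e he
    rw [load, husers_s e he, Finset.sum_insert (hiI e), add_comm]
  have hload_s' : ∀ e, e ∈ si' → load w s' e = (∑ j ∈ I e, w j) + w i := by
    intro e he
    rw [load, husers_s' e he, Finset.sum_insert (hiI e), add_comm]
  have hXnn : ∀ e, 0 ≤ w i * c e ((∑ j ∈ I e, w j) + w i) :=
    fun e => mul_nonneg (hw i).le (hc _ _)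
  -- per-resource bounds
  have hA : ∀ e ∈ s i \ si', w i * c e (load w s e) ≤
      (1 / α₁ e) * φ e (usersOf s e) - (1 / α₁ e) * φ e (usersOf s' e) := by
    intro e he
    rw [Finset.mem_sdiff] at he
    rw [husers_s e he.1, husers_s'_not e he.2, hload_s e he.1, ← mul_sub]
    have h1 := (hφ e i (I e) (hiI e)).1
    have h2 : (α₁ e)⁻¹ * (α₁ e * (w i * c e ((∑ j ∈ I e, w j) + w i))) ≤
        (α₁ e)⁻¹ * (φ e (insert i (I e)) - φ e (I e)) :=
      mul_le_mul_of_nonneg_left h1 (inv_nonneg.mpr (hα₁ e).le)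
    rw [one_div]
    rwa [inv_mul_cancel_left₀ (hα₁ e).ne'] at h2
  have hB : ∀ e ∈ si' \ s i, (1 / α₁ e) * φ e (usersOf s' e) - (1 / α₁ e) * φ e (usersOf s e) ≤
      α * (w i * c e (load w s' e)) := by
    intro e he
    rw [Finset.mem_sdiff] at he
    rw [husers_s' e he.1, husers_s_not e he.2, hload_s' e he.1, ← mul_sub]
    have h1 := (hφ e i (I e) (hiI e)).2
    have h2 : (1 / α₁ e) * (φ e (insert i (I e)) - φ e (I e)) ≤
        (1 / α₁ e) * (α₂ e * (w i * c e ((∑ j ∈ I e, w j) + w i))) :=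
      mul_le_mul_of_nonneg_left h1 (le_of_lt (by rw [one_div]; exact inv_pos.mpr (hα₁ e)))
    refine h2.trans ?_
    rw [← mul_assoc, one_div, ← div_eq_inv_mul]
    exact mul_le_mul_of_nonneg_right (hαge e) (hXnn e)
  have husers_eq : ∀ e, e ∉ (s i \ si') ∪ (si' \ s i) → usersOf s e = usersOf s' e := by
    intro e he
    rw [Finset.mem_union, Finset.mem_sdiff, Finset.mem_sdiff] at he
    push_neg at he
    by_cases h : e ∈ s i
    · rw [husers_s e h, husers_s' e (he.1 h)]
    · by_cases h2 : e ∈ si'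
      · exact absurd (he.2 h2) h
      · rw [husers_s_not e h, husers_s'_not e h2]
  -- potential inequality
  set F : E → ℝ := fun e => (1 / α₁ e) * φ e (usersOf s e) - (1 / α₁ e) * φ e (usersOf s' e)
    with hFdef
  have hFsum : ∑ e : E, F e ≤ 0 := by
    rw [Finset.sum_sub_distrib, sub_nonpos]
    exact hmin s' hs'S
  have hFsplit : ∑ e ∈ s i \ si', F e + ∑ e ∈ si' \ s i, F e ≤ 0 := by
    rw [← Finset.sum_union (disjoint_sdiff_sdiff)]
    calc ∑ e ∈ (s i \ si') ∪ (si' \ s i), F e = ∑ e : E, F e := by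
          refine Finset.sum_subset (Finset.subset_univ _) ?_
          intro e _ he
          simp only [hFdef, husers_eq e he, sub_self]
      _ ≤ 0 := hFsum
  have hkey : ∑ e ∈ s i \ si', w i * c e (load w s e) ≤
      ∑ e ∈ si' \ s i, α * (w i * c e (load w s' e)) := by
    calc ∑ e ∈ s i \ si', w i * c e (load w s e) ≤ ∑ e ∈ s i \ si', F e :=
          Finset.sum_le_sum hA
      _ ≤ -∑ e ∈ si' \ s i, F e := by linarith
      _ = ∑ e ∈ si' \ s i, -F e := by rw [Finset.sum_neg_distrib]
      _ ≤ ∑ e ∈ si' \ s i, α * (w i * c e (load w s' e)) := by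
          refine Finset.sum_le_sum ?_
          intro e he
          have := hB e he
          simp only [hFdef]
          linarith
  have hB' : ∑ e ∈ s i \ si', c e (load w s e) ≤ α * ∑ e ∈ si' \ s i, c e (load w s' e) := by
    have h1 : w i * ∑ e ∈ s i \ si', c e (load w s e) ≤
        w i * (α * ∑ e ∈ si' \ s i, c e (load w s' e)) := by
      rw [Finset.mul_sum]
      refine hkey.trans (le_of_eq ?_)
      rw [Finset.mul_sum, Finset.mul_sum]
      exact Finset.sum_congr rfl (fun e _ => by ring)
    exact le_of_mul_le_mul_left h1 (hw i)
  have hcommon : ∀ e ∈ s i ∩ si', c e (load w s e) ≤ α * c e (load w s' e) := by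
    intro e he
    rw [Finset.mem_inter] at he
    rw [hload_s e he.1, hload_s' e he.2]
    set X := c e ((∑ j ∈ I e, w j) + w i) with hXdef
    have hXn : 0 ≤ X := hc _ _
    have hsand := hφ e i (I e) (hiI e)
    have h12 : α₁ e * (w i * X) ≤ α₂ e * (w i * X) := hsand.1.trans hsand.2
    have hle : w i * X ≤ (α₂ e / α₁ e) * (w i * X) := by
      rw [div_mul_eq_mul_div, le_div_iff₀ (hα₁ e)]
      linarith
    have hle2 : (α₂ e / α₁ e) * (w i * X) ≤ α * (w i * X) :=
      mul_le_mul_of_nonneg_right (hαge e) (hXnn e)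
    have : w i * X ≤ w i * (α * X) := by
      refine (hle.trans hle2).trans (le_of_eq (by ring))
    exact le_of_mul_le_mul_left this (hw i)
  -- assemble
  have hPC : playerCost w c s i =
      ∑ e ∈ s i ∩ si', c e (load w s e) + ∑ e ∈ s i \ si', c e (load w s e) := by
    rw [playerCost, Finset.sum_inter_add_sum_sdiff]
  have hPC' : playerCost w c s' i =
      ∑ e ∈ s i ∩ si', c e (load w s' e) + ∑ e ∈ si' \ s i, c e (load w s' e) := by
    rw [playerCost, hs'i, ← Finset.sum_inter_add_sum_sdiff si' (s i) (fun e => c e (load w s' e)),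
      Finset.inter_comm]
  have h2 : ∑ e ∈ s i ∩ si', c e (load w s e) ≤ α * ∑ e ∈ s i ∩ si', c e (load w s' e) := by
    rw [Finset.mul_sum]
    exact Finset.sum_le_sum hcommon
  have hfinal : playerCost w c s i ≤ α * playerCost w c s' i := by
    rw [hPC, hPC', mul_add]
    exact add_le_add h2 hB'
  exact hfinal
end

section
/- In the setting of the Potential Method Lemma, suppose additionally that for each e there exist positive reals β₁ₑ, β₂ₑ with β₁ₑ · w_I · c_e(w_I) ≤ φ_e(I) ≤ β₂ₑ · w_I · c_e(w_I) for all nonempty I ⊆ N. Then for any minimizer s of Φ(s) = Σ_e (1/α₁ₑ) φ_e(N_e(s)) and any profile s', the social cost C(s) = Σ_e x_e(s) c_e(x_e(s)) satisfies C(s) ≤ β · C(s') with β = (max_e β₂ₑ/α₁ₑ) / (min_e β₁ₑ/α₁ₑ). -/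
open Finset

variable {ι E : Type*}

/-- The social cost of a profile. -/
def socialCost [Fintype ι] [Fintype E] [DecidableEq E] (w : ι → ℝ) (c : E → ℝ → ℝ)
    (s : ι → Finset E) : ℝ :=
  ∑ e : E, load w s e * c e (load w s e)

theorem potential_method_pos
    [Fintype ι] [DecidableEq ι] [Fintype E] [DecidableEq E] [Nonempty E]
    (w : ι → ℝ) (hw : ∀ i, 0 < w i)
    (c : E → ℝ → ℝ) (hc : ∀ e t, 0 ≤ c e t)
    (S : ι → Set (Finset E))
    (α₁ α₂ β₁ β₂ : E → ℝ)
    (hα₁ : ∀ e, 0 < α₁ e) (hα₂ : ∀ e, 0 < α₂ e)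
    (hβ₁ : ∀ e, 0 < β₁ e) (hβ₂ : ∀ e, 0 < β₂ e)
    (φ : E → Finset ι → ℝ) (hφ0 : ∀ e, φ e ∅ = 0)
    (hφ : ∀ e (i : ι) (I : Finset ι), i ∉ I →
      α₁ e * (w i * c e ((∑ j ∈ I, w j) + w i)) ≤ φ e (insert i I) - φ e I ∧
        φ e (insert i I) - φ e I ≤ α₂ e * (w i * c e ((∑ j ∈ I, w j) + w i)))
    (hφβ : ∀ e (I : Finset ι), I.Nonempty →
      β₁ e * ((∑ j ∈ I, w j) * c e (∑ j ∈ I, w j)) ≤ φ e I ∧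
        φ e I ≤ β₂ e * ((∑ j ∈ I, w j) * c e (∑ j ∈ I, w j)))
    (s : ι → Finset E) (hs : ∀ i, s i ∈ S i)
    (hmin : ∀ s' : ι → Finset E, (∀ i, s' i ∈ S i) →
      (∑ e : E, (1 / α₁ e) * φ e (usersOf s e)) ≤ ∑ e : E, (1 / α₁ e) * φ e (usersOf s' e)) :
    ∀ s' : ι → Finset E, (∀ i, s' i ∈ S i) →
      socialCost w c s ≤
        ((Finset.univ.sup' Finset.univ_nonempty (fun e : E => β₂ e / α₁ e)) /
          (Finset.univ.inf' Finset.univ_nonempty (fun e : E => β₁ e / α₁ e))) *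
            socialCost w c s' := by
  intro s' hs'
  set M := (Finset.univ.sup' Finset.univ_nonempty (fun e : E => β₂ e / α₁ e)) with hM
  set m := (Finset.univ.inf' Finset.univ_nonempty (fun e : E => β₁ e / α₁ e)) with hm
  have hmpos : 0 < m := (Finset.lt_inf'_iff _).mpr fun e _ => div_pos (hβ₁ e) (hα₁ e)
  have hload : ∀ (t : ι → Finset E) e, 0 ≤ load w t e := fun t e =>
    Finset.sum_nonneg fun i _ => (hw i).le
  have key1 : m * socialCost w c s ≤ ∑ e : E, (1 / α₁ e) * φ e (usersOf s e) := by
    rw [socialCost, Finset.mul_sum]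
    apply Finset.sum_le_sum
    intro e _
    rcases (usersOf s e).eq_empty_or_nonempty with h | h
    · have hl : load w s e = 0 := by rw [load, h, Finset.sum_empty]
      rw [h, hφ0, hl, mul_zero, zero_mul, mul_zero]
    · have h1 := (hφβ e _ h).1
      have hle : load w s e = ∑ j ∈ usersOf s e, w j := rfl
      have hnn : 0 ≤ load w s e * c e (load w s e) :=
        mul_nonneg (hload s e) (hc e _)
      calc m * (load w s e * c e (load w s e))
          ≤ (β₁ e / α₁ e) * (load w s e * c e (load w s e)) :=
            mul_le_mul_of_nonneg_right (Finset.inf'_le _ (Finset.mem_univ e)) hnn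
        _ = (1 / α₁ e) * (β₁ e * (load w s e * c e (load w s e))) := by ring
        _ ≤ (1 / α₁ e) * φ e (usersOf s e) := by
            apply mul_le_mul_of_nonneg_left _ (one_div_nonneg.mpr (hα₁ e).le)
            rw [hle] at *; exact h1
  have key2 : ∑ e : E, (1 / α₁ e) * φ e (usersOf s' e) ≤ M * socialCost w c s' := by
    rw [socialCost, Finset.mul_sum]
    apply Finset.sum_le_sum
    intro e _
    rcases (usersOf s' e).eq_empty_or_nonempty with h | h
    · have hl : load w s' e = 0 := by rw [load, h, Finset.sum_empty]
      rw [h, hφ0, hl, mul_zero, zero_mul, mul_zero]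
    · have h2 := (hφβ e _ h).2
      have hle : load w s' e = ∑ j ∈ usersOf s' e, w j := rfl
      have hnn : 0 ≤ load w s' e * c e (load w s' e) :=
        mul_nonneg (hload s' e) (hc e _)
      calc (1 / α₁ e) * φ e (usersOf s' e)
          ≤ (1 / α₁ e) * (β₂ e * (load w s' e * c e (load w s' e))) := by
            apply mul_le_mul_of_nonneg_left _ (one_div_nonneg.mpr (hα₁ e).le)
            rw [hle]; exact h2
        _ = (β₂ e / α₁ e) * (load w s' e * c e (load w s' e)) := by ring
        _ ≤ M * (load w s' e * c e (load w s' e)) :=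
            mul_le_mul_of_nonneg_right (Finset.le_sup' (fun e => β₂ e / α₁ e) (Finset.mem_univ e)) hnn
  have hchain := (key1.trans (hmin s' hs')).trans key2
  rw [div_mul_eq_mul_div, le_div_iff₀ hmpos]
  nlinarith [hchain]
end
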